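/- For every bounded measurable outcome model m : ℝ^p → ℝ (possibly misspecified), the augmented estimand is exactly unbiased for the treatment-arm RMST: E[1{Z=1} δ* (Y − m(X)) / (π G(Y))] + E[m(X)] = E[min(T(1), t*)]; in particular the identity holds regardless of the choice of m, demonstrating robustness of the augmented estimator to outcome-model misspecification. -/

import Mathlib

/-!
Condition on everything but the censoring time: since `C` is independent of `(Z, T(1), X)`, the
indicator `1{C ≥ Y}` may be replaced by `P(C ≥ Y)`, which equals `G(Y)` because `C` has no atoms,
and so cancels the inverse weight. What is left is `E[1{Z = 1} (min(T(1), t*) - m(X))] / π`, and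
randomization turns `1{Z = 1}` into `π`. Hence the first term is `E[min(T(1), t*)] - E[m(X)]`
for every `m`.
-/

open MeasureTheory ProbabilityTheory

lemma abs_min_le_abs_right_of_nonneg {α : Type*} [AddCommGroup α] [LinearOrder α]
    [IsOrderedAddMonoid α] {a b : α} (ha : 0 ≤ a) : |min a b| ≤ |b| :=
  abs_le.mpr ⟨le_min ((neg_nonpos.mpr (abs_nonneg b)).trans ha) (neg_abs_le b),
    (min_le_right a b).trans (le_abs_self b)⟩

section

variable {Ω β γ : Type*} [MeasurableSpace Ω] [MeasurableSpace β] [MeasurableSpace γ]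
  {P : Measure Ω}

namespace MeasureTheory

lemma measureReal_le_eq_measureReal_lt {C : Ω → ℝ} {y : ℝ} (hatom : P {ω | C ω = y} = 0) :
    P.real {ω | y ≤ C ω} = P.real {ω | y < C ω} := by
  have hsplit : {ω | y ≤ C ω} \ {ω | C ω = y} = {ω | y < C ω} := by
    ext ω
    simp [lt_iff_le_and_ne, eq_comm]
  rw [← hsplit, measureReal_def, measureReal_def, measure_sdiff_null hatom]

lemma antitone_measureReal_le [IsFiniteMeasure P] (C : Ω → ℝ) :
    Antitone fun y => P.real {ω | y ≤ C ω} :=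
  fun _ _ hab => measureReal_mono fun _ hω => le_trans hab hω

end MeasureTheory

namespace ProbabilityTheory.IndepFun

lemma integral_ite_eq_mul [DecidableEq γ] [MeasurableSingletonClass γ] {Z : Ω → γ}
    {V : Ω → β} (hZV : IndepFun Z V P) (hZ : Measurable Z) (hV : Measurable V) {g : β → ℝ}
    (hg : Measurable g) (a : γ) :
    ∫ ω, (if Z ω = a then g (V ω) else 0) ∂P = P.real {ω | Z ω = a} * ∫ ω, g (V ω) ∂P := by
  have hite : ∀ ω, (if Z ω = a then g (V ω) else 0)
      = ({a} : Set γ).indicator 1 (Z ω) * g (V ω) := fun ω => by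
    by_cases h : Z ω = a <;> simp [h]
  have hprob : ∫ ω, ({a} : Set γ).indicator (1 : γ → ℝ) (Z ω) ∂P = P.real {ω | Z ω = a} :=
    integral_indicator_one (hZ (measurableSet_singleton a))
  simp only [hite]
  rw [hZV.integral_fun_comp_mul_comp hZ.aemeasurable hV.aemeasurable
    (measurable_one.indicator (measurableSet_singleton a)).aestronglyMeasurable
    hg.aestronglyMeasurable, hprob]

theorem integral_ite_le_mul [IsFiniteMeasure P] {C : Ω → ℝ} {W : Ω → β}
    (hCW : IndepFun C W P) (hC : Measurable C) (hW : Measurable W) {y f : β → ℝ}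
    (hy : Measurable y) (hf : Measurable f) (hfW : Integrable (fun ω => f (W ω)) P) :
    ∫ ω, (if y (W ω) ≤ C ω then 1 else 0) * f (W ω) ∂P
      = ∫ ω, P.real {ω' | y (W ω) ≤ C ω'} * f (W ω) ∂P := by
  set F : ℝ × β → ℝ := fun q => (if y q.2 ≤ q.1 then 1 else 0) * f q.2
  have hF : Measurable F :=
    (Measurable.ite (measurableSet_le (hy.comp measurable_snd) measurable_fst)
      measurable_const measurable_const).mul (hf.comp measurable_snd)
  have hCW' : AEMeasurable (fun ω => (C ω, W ω)) P := (hC.prodMk hW).aemeasurable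
  have hmap : P.map (fun ω => (C ω, W ω)) = (P.map C).prod (P.map W) :=
    (indepFun_iff_map_prod_eq_prod_map_map hC.aemeasurable hW.aemeasurable).mp hCW
  have hFint : Integrable F ((P.map C).prod (P.map W)) := by
    rw [← hmap, integrable_map_measure hF.aestronglyMeasurable hCW']
    refine hfW.mono (hF.comp (hC.prodMk hW)).aestronglyMeasurable (ae_of_all _ fun ω => ?_)
    by_cases h : y (W ω) ≤ C ω <;> simp [F, h]
  have hinner : ∀ w, ∫ c, F (c, w) ∂P.map C = P.real {ω' | y w ≤ C ω'} * f w := fun w => by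
    have hFw : (fun c => F (c, w)) = (Set.Ici (y w)).indicator fun _ => f w := by
      ext c
      by_cases h : y w ≤ c <;> simp [F, h]
    rw [hFw, integral_indicator_const _ measurableSet_Ici,
      map_measureReal_apply hC measurableSet_Ici, smul_eq_mul]
    rfl
  calc ∫ ω, (if y (W ω) ≤ C ω then 1 else 0) * f (W ω) ∂P
      = ∫ q, F q ∂(P.map C).prod (P.map W) := by
        rw [← hmap, integral_map hCW' hF.aestronglyMeasurable]
    _ = ∫ w, P.real {ω' | y w ≤ C ω'} * f w ∂P.map W := by
        simp only [integral_prod_symm F hFint, hinner]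
    _ = ∫ ω, P.real {ω' | y (W ω) ≤ C ω'} * f (W ω) ∂P :=
        integral_map hW.aemeasurable
          (((antitone_measureReal_le C).measurable.comp hy).mul hf).aestronglyMeasurable

theorem integral_inverse_censoring_weighted [IsFiniteMeasure P] {C : Ω → ℝ} {W : Ω → β}
    (hCW : IndepFun C W P) (hC : Measurable C) (hW : Measurable W) {y g : β → ℝ}
    (hy : Measurable y) (hg : Measurable g) (hgW : Integrable (fun ω => g (W ω)) P)
    {t : ℝ} (hyt : ∀ w, y w ≤ t) (ht : 0 < P.real {ω | t ≤ C ω}) :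
    ∫ ω, (if y (W ω) ≤ C ω then 1 else 0) * g (W ω) / P.real {ω' | y (W ω) ≤ C ω'} ∂P
      = ∫ ω, g (W ω) ∂P := by
  set S : ℝ → ℝ := fun s => P.real {ω | s ≤ C ω}
  have hS : Antitone S := antitone_measureReal_le C
  have hSpos : ∀ w, 0 < S (y w) := fun w => ht.trans_le (hS (hyt w))
  have hSinv : ∀ w, ‖(S (y w))⁻¹‖ ≤ (S t)⁻¹ := fun w => by
    rw [Real.norm_eq_abs, abs_of_pos (inv_pos.mpr (hSpos w))]
    exact inv_anti₀ ht (hS (hyt w))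
  have hfW : Integrable (fun ω => (S (y (W ω)))⁻¹ * g (W ω)) P :=
    hgW.bdd_mul (hS.measurable.comp (hy.comp hW)).inv.aestronglyMeasurable
      (ae_of_all _ fun ω => hSinv (W ω))
  calc ∫ ω, (if y (W ω) ≤ C ω then 1 else 0) * g (W ω) / S (y (W ω)) ∂P
      = ∫ ω, (if y (W ω) ≤ C ω then 1 else 0) * ((S (y (W ω)))⁻¹ * g (W ω)) ∂P := by
        congr 1 with ω
        ring
    _ = ∫ ω, S (y (W ω)) * ((S (y (W ω)))⁻¹ * g (W ω)) ∂P :=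
        hCW.integral_ite_le_mul hC hW hy (f := fun w => (S (y w))⁻¹ * g w)
          ((hS.measurable.comp hy).inv.mul hg) hfW
    _ = ∫ ω, g (W ω) ∂P :=
        integral_congr_ae (ae_of_all _ fun ω => mul_inv_cancel_left₀ (hSpos (W ω)).ne' _)

theorem integral_ite_inverse_censoring_weighted [IsFiniteMeasure P] [DecidableEq γ]
    [MeasurableSingletonClass γ] {C : Ω → ℝ} {Z : Ω → γ} {V : Ω → β}
    (hCZV : IndepFun C (fun ω => (Z ω, V ω)) P) (hZV : IndepFun Z V P)
    (hC : Measurable C) (hZ : Measurable Z) (hV : Measurable V) {y r : β → ℝ}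
    (hy : Measurable y) (hr : Measurable r) (hrV : Integrable (fun ω => r (V ω)) P) (a : γ)
    {t : ℝ} (hyt : ∀ v, y v ≤ t) (ht : 0 < P.real {ω | t ≤ C ω}) :
    ∫ ω, (if Z ω = a then 1 else 0) * (if y (V ω) ≤ C ω then 1 else 0) * r (V ω)
        / P.real {ω' | y (V ω) ≤ C ω'} ∂P
      = P.real {ω | Z ω = a} * ∫ ω, r (V ω) ∂P := by
  set g : γ × β → ℝ := fun w => if w.1 = a then r w.2 else 0
  have hg : Measurable g :=
    Measurable.ite (measurable_fst (measurableSet_singleton a)) (hr.comp measurable_snd)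
      measurable_const
  have hgZV : Integrable (fun ω => g (Z ω, V ω)) P := by
    refine (hrV.indicator (hZ (measurableSet_singleton a))).congr (ae_of_all _ fun ω => ?_)
    by_cases h : Z ω = a <;> simp [g, h]
  have hite : ∀ ω, (if Z ω = a then 1 else 0) * (if y (V ω) ≤ C ω then 1 else 0) * r (V ω)
      = (if y (V ω) ≤ C ω then 1 else 0) * g (Z ω, V ω) := fun ω => by
    by_cases h : Z ω = a <;> simp [g, h]
  simp only [hite]
  exact (hCZV.integral_inverse_censoring_weighted hC (hZ.prodMk hV) (y := fun w => y w.2)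
    (hy.comp measurable_snd) hg hgZV (fun w => hyt w.2) ht).trans
    (hZV.integral_ite_eq_mul hZ hV hr a)

end ProbabilityTheory.IndepFun

end

theorem augmented_estimand_robust_to_outcome_model_general
    {Ω : Type*} [mΩ : MeasurableSpace Ω] (P : Measure Ω) [IsProbabilityMeasure P]
    {p : ℕ} (T1 T0 C Z : Ω → ℝ) (X : Ω → (Fin p → ℝ))
    (hT1 : Measurable T1) (hC : Measurable C)
    (hZ : Measurable Z) (hX : Measurable X)
    (hT1nonneg : ∀ ω, 0 ≤ T1 ω)
    (π : ℝ) (hπ : (P {ω | Z ω = 1}).toReal = π) (hπ0 : 0 < π)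
    (tstar : ℝ)
    (hZind : IndepFun Z (fun ω => (T1 ω, T0 ω, X ω)) P)
    (hCind : IndepFun C (fun ω => (Z ω, T1 ω, T0 ω, X ω)) P)
    (hatom : ∀ c : ℝ, P {ω | C ω = c} = 0)
    (G : ℝ → ℝ) (hG : ∀ y, G y = (P {ω | y < C ω}).toReal) (hGt : 0 < G tstar)
    (T Y δs : Ω → ℝ)
    (hT : ∀ ω, T ω = Z ω * T1 ω + (1 - Z ω) * T0 ω)
    (hY : ∀ ω, Y ω = min (T ω) tstar)
    (hδs : ∀ ω, δs ω = if Y ω ≤ C ω then 1 else 0) :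
    ∀ m : (Fin p → ℝ) → ℝ, Measurable m → (∃ K : ℝ, ∀ x, |m x| ≤ K) →
      (∫ ω, (if Z ω = 1 then (1 : ℝ) else 0) * δs ω * (Y ω - m (X ω)) / (π * G (Y ω)) ∂P)
        + ∫ ω, m (X ω) ∂P
      = ∫ ω, min (T1 ω) tstar ∂P := by
  rintro m hm ⟨K, hK⟩
  have hG_le : ∀ t, G t = P.real {ω | t ≤ C ω} := fun t => by
    rw [hG, measureReal_le_eq_measureReal_lt (hatom t), measureReal_def]
  have hT1int : Integrable (fun ω => min (T1 ω) tstar) P :=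
    .of_bound (hT1.min measurable_const).aestronglyMeasurable |tstar|
      (ae_of_all _ fun ω => abs_min_le_abs_right_of_nonneg (hT1nonneg ω))
  have hmXint : Integrable (fun ω => m (X ω)) P :=
    .of_bound (hm.comp hX).aestronglyMeasurable K (ae_of_all _ fun ω => hK (X ω))
  have hintegrand : ∀ ω,
      (if Z ω = 1 then (1 : ℝ) else 0) * δs ω * (Y ω - m (X ω)) / (π * G (Y ω))
        = (if Z ω = 1 then 1 else 0) * (if min (T1 ω) tstar ≤ C ω then 1 else 0)
            * ((min (T1 ω) tstar - m (X ω)) / π) / P.real {ω' | min (T1 ω) tstar ≤ C ω'} :=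
    fun ω => by
      by_cases hZω : Z ω = 1
      · have hYω : Y ω = min (T1 ω) tstar := by simp [hY, hT, hZω]
        simp only [hZω, hYω, hδs, hG_le, if_true]
        rw [← mul_div_assoc, div_div]
      · simp [hZω]
  have hCZV : IndepFun C (fun ω => (Z ω, T1 ω, X ω)) P :=
    hCind.comp measurable_id
      (measurable_fst.prodMk (measurable_snd.fst.prodMk measurable_snd.snd.snd))
  have hZV : IndepFun Z (fun ω => (T1 ω, X ω)) P :=
    hZind.comp measurable_id (measurable_fst.prodMk measurable_snd.snd)
  have hipcw := hCZV.integral_ite_inverse_censoring_weighted hZV hC hZ (hT1.prodMk hX)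
    (y := fun v => min v.1 tstar) (r := fun v => (min v.1 tstar - m v.2) / π)
    (measurable_fst.min measurable_const)
    (((measurable_fst.min measurable_const).sub (hm.comp measurable_snd)).div_const π)
    ((hT1int.sub hmXint).div_const π) 1 (fun v => min_le_right v.1 tstar) (hG_le tstar ▸ hGt)
  dsimp only at hipcw
  simp only [hintegrand]
  rw [hipcw, measureReal_def, hπ, integral_div, integral_sub hT1int hmXint]
  field_simp
  ring

theorem augmented_estimand_robust_to_outcome_model
    {Ω : Type*} [mΩ : MeasurableSpace Ω] (P : Measure Ω) [IsProbabilityMeasure P]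
    {p : ℕ} (T1 T0 C Z : Ω → ℝ) (X : Ω → (Fin p → ℝ))
    (hT1 : Measurable T1) (hT0 : Measurable T0) (hC : Measurable C)
    (hZ : Measurable Z) (hX : Measurable X)
    (hT1nonneg : ∀ ω, 0 ≤ T1 ω) (hT0nonneg : ∀ ω, 0 ≤ T0 ω)
    (hZ01 : ∀ ω, Z ω = 0 ∨ Z ω = 1)
    (π : ℝ) (hπ : (P {ω | Z ω = 1}).toReal = π) (hπ0 : 0 < π) (hπ1 : π < 1)
    (tstar : ℝ) (htstar : 0 < tstar)
    (hZind : IndepFun Z (fun ω => (T1 ω, T0 ω, X ω)) P)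
    (hCind : IndepFun C (fun ω => (Z ω, T1 ω, T0 ω, X ω)) P)
    (hatom : ∀ c : ℝ, P {ω | C ω = c} = 0)
    (G : ℝ → ℝ) (hG : ∀ y, G y = (P {ω | y < C ω}).toReal) (hGt : 0 < G tstar)
    (T Y δs : Ω → ℝ)
    (hT : ∀ ω, T ω = Z ω * T1 ω + (1 - Z ω) * T0 ω)
    (hY : ∀ ω, Y ω = min (T ω) tstar)
    (hδs : ∀ ω, δs ω = if Y ω ≤ C ω then 1 else 0) :
    ∀ m : (Fin p → ℝ) → ℝ, Measurable m → (∃ K : ℝ, ∀ x, |m x| ≤ K) →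
      (∫ ω, (if Z ω = 1 then (1 : ℝ) else 0) * δs ω * (Y ω - m (X ω)) / (π * G (Y ω)) ∂P)
        + ∫ ω, m (X ω) ∂P
      = ∫ ω, min (T1 ω) tstar ∂P :=
  augmented_estimand_robust_to_outcome_model_general (mΩ := mΩ) P T1 T0 C Z X hT1 hC hZ hX hT1nonneg
    π hπ hπ0 tstar hZind hCind hatom G hG hGt T Y δs hT hY hδs
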